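/- arXiv:math/0312426 — 7 statements merged into one kernel-verified Lean document; each statement's English description precedes it below -/
import Mathlib

section
/- Let x = (V,c,V,c) ∈ M^τ with V generic. For every r ∈ Z(G) with r² = e, the tuple x_r := (V, c·r, V, c·r) lies in M^τ and lies in the K-orbit of x. Moreover, the map sending r to the K^τ-orbit of x_r is a bijection from {r ∈ Z(G) : r² = e} onto the set of K^τ-orbits of points of M^τ that are contained in the K-orbit of x. In particular, the natural map I : M^τ/K^τ → M/K (sending a K^τ-orbit to the K-orbit containing it) is exactly |{r ∈ Z(G) : r² = e}|-to-one over the class of x. -/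
/-! Model of flat `G`-connections on `Σ_ℓ # RP²` and its orientable double cover
(genus `2ℓ`), following the two-base-point description.  A point of `G^{4ℓ+2}`
is a tuple `(a₁,b₁,…,a_ℓ,b_ℓ,c, ā₁,b̄₁,…,ā_ℓ,b̄_ℓ,c̄)`. -/
structure Pt (G : Type*) (ℓ : ℕ) where
  a : Fin ℓ → G
  b : Fin ℓ → G
  c : G
  a' : Fin ℓ → G
  b' : Fin ℓ → G
  c' : G

variable {G : Type*} [Group G] {ℓ : ℕ}

open scoped commutatorElement

/-- The ordered product of commutators `∏_{i=1}^{ℓ} [aᵢ,bᵢ]`. -/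
def relProd (a b : Fin ℓ → G) : G := (List.ofFn fun i => ⁅a i, b i⁆).prod

/-- Membership in `M`: `∏[aᵢ,bᵢ] = c·c̄` and `∏[āᵢ,b̄ᵢ] = c̄·c`. -/
def inM (x : Pt G ℓ) : Prop :=
  relProd x.a x.b = x.c * x.c' ∧ relProd x.a' x.b' = x.c' * x.c

/-- The action of `K = G × G` on tuples. -/
def act (g : G × G) (x : Pt G ℓ) : Pt G ℓ where
  a := fun i => g.1 * x.a i * g.1⁻¹
  b := fun i => g.1 * x.b i * g.1⁻¹
  c := g.1 * x.c * g.2⁻¹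
  a' := fun i => g.2 * x.a' i * g.2⁻¹
  b' := fun i => g.2 * x.b' i * g.2⁻¹
  c' := g.2 * x.c' * g.1⁻¹

/-- The involution `τ(V,c,V̄,c̄) = (V̄,c̄,V,c)`. -/
def tauPt (x : Pt G ℓ) : Pt G ℓ := ⟨x.a', x.b', x.c', x.a, x.b, x.c⟩

/-- Membership in `M^τ`: a point of `M` of the form `(V,c,V,c)`. -/
def inMtau (x : Pt G ℓ) : Prop := inM x ∧ x.a' = x.a ∧ x.b' = x.b ∧ x.c' = x.c

/-- `V = (a₁,b₁,…,a_ℓ,b_ℓ)` is generic if every `g` commuting with all `aᵢ, bᵢ`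
is central. -/
def Generic (a b : Fin ℓ → G) : Prop :=
  ∀ g : G, (∀ i, g * a i = a i * g) → (∀ i, g * b i = b i * g) →
    g ∈ Subgroup.center G

/-- Membership in `N_r = {(V,c,V,c·r) : ∏[aᵢ,bᵢ] = c²·r}`. -/
def inN (r : G) (x : Pt G ℓ) : Prop :=
  x.a' = x.a ∧ x.b' = x.b ∧ x.c' = x.c * r ∧ relProd x.a x.b = x.c ^ 2 * r

/-! If `(g₁, g₂) ∈ K` carries `x` into `M^τ`, then `g₁` and `g₂` conjugate `V` to the same
tuple, so `z = g₂⁻¹g₁` centralises `V` and is central by genericity; equality of the two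
`c`-entries of the image then forces `z² = e`, and `(g₁, g₁) ∈ K^τ` carries `x_z` to the image.
Likewise an element `(h, h)` relating `x_{r₁}` and `x_{r₂}` centralises `V`, hence is central
and fixes `c·r₁`, so `r₁ = r₂`. -/

open Subgroup

theorem conj_eq_of_mem_center {z : G} (hz : z ∈ center G) (g : G) : z * g * z⁻¹ = g := by
  rw [← mem_center_iff.mp hz g, mul_inv_cancel_right]

theorem conj_inv_mul_eq_of_conj_eq_conj {g₁ g₂ x : G} (h : g₁ * x * g₁⁻¹ = g₂ * x * g₂⁻¹) :
    g₂⁻¹ * g₁ * x * (g₂⁻¹ * g₁)⁻¹ = x :=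
  calc g₂⁻¹ * g₁ * x * (g₂⁻¹ * g₁)⁻¹ = g₂⁻¹ * (g₁ * x * g₁⁻¹) * g₂ := by group
    _ = x := by rw [h]; group

theorem sq_inv_mul_eq_one_of_mem_center {g₁ g₂ c : G} (hz : g₂⁻¹ * g₁ ∈ center G)
    (h : g₁ * c * g₂⁻¹ = g₂ * c * g₁⁻¹) : (g₂⁻¹ * g₁) ^ 2 = 1 := by
  have hczz : g₂⁻¹ * g₁ * c * (g₂⁻¹ * g₁) = c :=
    calc g₂⁻¹ * g₁ * c * (g₂⁻¹ * g₁) = g₂⁻¹ * (g₁ * c * g₂⁻¹) * g₁ := by group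
      _ = c := by rw [h]; group
  rwa [← mem_center_iff.mp hz c, mul_assoc, mul_eq_left, ← sq] at hczz

section

variable {a b : Fin ℓ → G} {c r : G}

theorem Generic.mem_center_of_conj_eq (hgen : Generic a b) {h : G}
    (ha : ∀ i, h * a i * h⁻¹ = a i) (hb : ∀ i, h * b i * h⁻¹ = b i) : h ∈ center G :=
  hgen h (fun i => mul_inv_eq_iff_eq_mul.mp (ha i)) (fun i => mul_inv_eq_iff_eq_mul.mp (hb i))

theorem Generic.inv_mul_mem_center_of_conj_eq_conj (hgen : Generic a b) {g₁ g₂ : G}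
    (ha : ∀ i, g₁ * a i * g₁⁻¹ = g₂ * a i * g₂⁻¹)
    (hb : ∀ i, g₁ * b i * g₁⁻¹ = g₂ * b i * g₂⁻¹) : g₂⁻¹ * g₁ ∈ center G :=
  hgen.mem_center_of_conj_eq (fun i => conj_inv_mul_eq_of_conj_eq_conj (ha i))
    (fun i => conj_inv_mul_eq_of_conj_eq_conj (hb i))

theorem inMtau_mul_of_mem_center (hx : inM (⟨a, b, c, a, b, c⟩ : Pt G ℓ))
    (hr : r ∈ center G) (hr2 : r ^ 2 = 1) :
    inMtau (⟨a, b, c * r, a, b, c * r⟩ : Pt G ℓ) := by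
  have hrel : relProd a b = c * r * (c * r) := by
    rw [hx.1, ← sq, ← sq, Commute.mul_pow (mem_center_iff.mp hr c), hr2, mul_one]
  exact ⟨⟨hrel, hrel⟩, rfl, rfl, rfl⟩

theorem act_one_of_mem_center (hr : r ∈ center G) (hr2 : r ^ 2 = 1) :
    act (1, r) (⟨a, b, c, a, b, c⟩ : Pt G ℓ) = ⟨a, b, c * r, a, b, c * r⟩ := by
  have hr_inv : r⁻¹ = r := inv_eq_of_mul_eq_one_right (sq r ▸ hr2)
  simp only [act, one_mul, inv_one, mul_one, conj_eq_of_mem_center hr]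
  rw [hr_inv, mem_center_iff.mp hr c]

theorem Generic.eq_of_act_diag_eq (hgen : Generic a b) {r₁ r₂ h : G}
    (heq : act (h, h) (⟨a, b, c * r₁, a, b, c * r₁⟩ : Pt G ℓ) = ⟨a, b, c * r₂, a, b, c * r₂⟩) :
    r₁ = r₂ := by
  have hh : h ∈ center G := hgen.mem_center_of_conj_eq
    (congrFun (congrArg Pt.a heq)) (congrFun (congrArg Pt.b heq))
  have hc : h * (c * r₁) * h⁻¹ = c * r₂ := congrArg Pt.c heq
  rw [conj_eq_of_mem_center hh] at hc
  exact mul_left_cancel hc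

theorem Generic.exists_act_diag_eq_of_act_eq (hgen : Generic a b) {y : Pt G ℓ}
    (hy : inMtau y) {g₁ g₂ : G} (hk : act (g₁, g₂) (⟨a, b, c, a, b, c⟩ : Pt G ℓ) = y) :
    ∃ r ∈ center G, r ^ 2 = 1 ∧
      ∃ h : G, act (h, h) (⟨a, b, c * r, a, b, c * r⟩ : Pt G ℓ) = y := by
  obtain ⟨-, hya, hyb, hyc⟩ := hy
  subst hk
  have hz : g₂⁻¹ * g₁ ∈ center G := hgen.inv_mul_mem_center_of_conj_eq_conj
    (fun i => (congrFun hya i).symm) (fun i => (congrFun hyb i).symm)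
  have hc : g₁ * (c * (g₂⁻¹ * g₁)) * g₁⁻¹ = g₁ * c * g₂⁻¹ := by group
  refine ⟨_, hz, sq_inv_mul_eq_one_of_mem_center hz hyc.symm, g₁, ?_⟩
  simp only [act, Pt.mk.injEq, true_and] at hya hyb hyc ⊢
  exact ⟨hc, hya.symm, hyb.symm, hc.trans hyc.symm⟩

end

theorem statement0_general (a b : Fin ℓ → G) (c : G)
    (hx : inM (⟨a, b, c, a, b, c⟩ : Pt G ℓ)) (hgen : Generic a b) :
    -- each `x_r` lies in `M^τ` and in the `K`-orbit of `x`
    (∀ r ∈ Subgroup.center G, r ^ 2 = 1 →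
      inMtau (⟨a, b, c * r, a, b, c * r⟩ : Pt G ℓ) ∧
      ∃ k : G × G, act k (⟨a, b, c, a, b, c⟩ : Pt G ℓ)
        = ⟨a, b, c * r, a, b, c * r⟩) ∧
    -- the assignment `r ↦ [x_r]` is injective on `{r ∈ Z(G) : r² = e}`
    (∀ r₁ ∈ Subgroup.center G, ∀ r₂ ∈ Subgroup.center G,
      r₁ ^ 2 = 1 → r₂ ^ 2 = 1 →
      (∃ h : G, act (h, h) (⟨a, b, c * r₁, a, b, c * r₁⟩ : Pt G ℓ)
        = ⟨a, b, c * r₂, a, b, c * r₂⟩) → r₁ = r₂) ∧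
    -- and surjective: every point of `M^τ` in the `K`-orbit of `x` lies in the
    -- `K^τ`-orbit of some `x_r`
    (∀ y : Pt G ℓ, inMtau y →
      (∃ k : G × G, act k (⟨a, b, c, a, b, c⟩ : Pt G ℓ) = y) →
      ∃ r ∈ Subgroup.center G, r ^ 2 = 1 ∧
        ∃ h : G, act (h, h) (⟨a, b, c * r, a, b, c * r⟩ : Pt G ℓ) = y) := by
  refine ⟨fun r hr hr2 =>
      ⟨inMtau_mul_of_mem_center hx hr hr2, (1, r), act_one_of_mem_center hr hr2⟩,
    fun r₁ _ r₂ _ _ _ ⟨_, heq⟩ => hgen.eq_of_act_diag_eq heq,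
    fun y hy ⟨(g₁, g₂), hk⟩ => hgen.exists_act_diag_eq_of_act_eq hy hk⟩

/-- for `x = (V,c,V,c) ∈ M^τ` with `V` generic, `r ↦` the
`K^τ`-orbit of `x_r = (V,c·r,V,c·r)` is a bijection from
`{r ∈ Z(G) : r² = e}` onto the `K^τ`-orbits inside the `K`-orbit of `x`. -/
theorem statement0 (hℓ : 1 ≤ ℓ) (a b : Fin ℓ → G) (c : G)
    (hx : inM (⟨a, b, c, a, b, c⟩ : Pt G ℓ)) (hgen : Generic a b) :
    -- each `x_r` lies in `M^τ` and in the `K`-orbit of `x`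
    (∀ r ∈ Subgroup.center G, r ^ 2 = 1 →
      inMtau (⟨a, b, c * r, a, b, c * r⟩ : Pt G ℓ) ∧
      ∃ k : G × G, act k (⟨a, b, c, a, b, c⟩ : Pt G ℓ)
        = ⟨a, b, c * r, a, b, c * r⟩) ∧
    -- the assignment `r ↦ [x_r]` is injective on `{r ∈ Z(G) : r² = e}`
    (∀ r₁ ∈ Subgroup.center G, ∀ r₂ ∈ Subgroup.center G,
      r₁ ^ 2 = 1 → r₂ ^ 2 = 1 →
      (∃ h : G, act (h, h) (⟨a, b, c * r₁, a, b, c * r₁⟩ : Pt G ℓ)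
        = ⟨a, b, c * r₂, a, b, c * r₂⟩) → r₁ = r₂) ∧
    -- and surjective: every point of `M^τ` in the `K`-orbit of `x` lies in the
    -- `K^τ`-orbit of some `x_r`
    (∀ y : Pt G ℓ, inMtau y →
      (∃ k : G × G, act k (⟨a, b, c, a, b, c⟩ : Pt G ℓ) = y) →
      ∃ r ∈ Subgroup.center G, r ^ 2 = 1 ∧
        ∃ h : G, act (h, h) (⟨a, b, c * r, a, b, c * r⟩ : Pt G ℓ) = y) :=
  statement0_general a b c hx hgen
end

section
/- Let x = (V,d,c,V,d,c) ∈ M^τ with (V,d) generic. For every r ∈ Z(G) with r² = e, the tuple x_r := (V, d, c·r, V, d, c·r) lies in M^τ and lies in the K-orbit of x. Moreover, the map sending r to the K^τ-orbit of x_r is a bijection from {r ∈ Z(G) : r² = e} onto the set of K^τ-orbits of points of M^τ that are contained in the K-orbit of x. In particular, the natural map I : M^τ/K^τ → M/K (sending a K^τ-orbit to the K-orbit containing it) is exactly |{r ∈ Z(G) : r² = e}|-to-one over the class of x. -/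
/-! Model of flat `G`-connections on `Σ_ℓ # Klein bottle` and its orientable
double cover (genus `2ℓ+1`), in the two-base-point description.  A point of
`G^{4ℓ+4}` is a tuple `(a₁,b₁,…,a_ℓ,b_ℓ,d,c, ā₁,b̄₁,…,ā_ℓ,b̄_ℓ,d̄,c̄)`. -/
structure PtK (G : Type*) (ℓ : ℕ) where
  a : Fin ℓ → G
  b : Fin ℓ → G
  d : G
  c : G
  a' : Fin ℓ → G
  b' : Fin ℓ → G
  d' : G
  c' : G

variable {G : Type*} [Group G] {ℓ : ℕ}

open scoped commutatorElement

/-- Membership in `M`: `∏[aᵢ,bᵢ] = c·d̄·c⁻¹·d` and `∏[āᵢ,b̄ᵢ] = c̄·d·c̄⁻¹·d̄`. -/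
def inMK (x : PtK G ℓ) : Prop :=
  relProd x.a x.b = x.c * x.d' * x.c⁻¹ * x.d ∧
  relProd x.a' x.b' = x.c' * x.d * x.c'⁻¹ * x.d'

/-- The action of `K = G × G` on tuples. -/
def actK (g : G × G) (x : PtK G ℓ) : PtK G ℓ where
  a := fun i => g.1 * x.a i * g.1⁻¹
  b := fun i => g.1 * x.b i * g.1⁻¹
  d := g.1 * x.d * g.1⁻¹
  c := g.1 * x.c * g.2⁻¹
  a' := fun i => g.2 * x.a' i * g.2⁻¹
  b' := fun i => g.2 * x.b' i * g.2⁻¹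
  d' := g.2 * x.d' * g.2⁻¹
  c' := g.2 * x.c' * g.1⁻¹

/-- The involution `τ(V,d,c,V̄,d̄,c̄) = (V̄,d̄,c̄,V,d,c)`. -/
def tauK (x : PtK G ℓ) : PtK G ℓ := ⟨x.a', x.b', x.d', x.c', x.a, x.b, x.d, x.c⟩

/-- Membership in `M^τ`: a point of `M` of the form `(V,d,c,V,d,c)`. -/
def inMtauK (x : PtK G ℓ) : Prop :=
  inMK x ∧ x.a' = x.a ∧ x.b' = x.b ∧ x.d' = x.d ∧ x.c' = x.c

/-- `(V,d)` is generic if every `g` commuting with `d` and with all `aᵢ, bᵢ`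
is central. -/
def GenericK (a b : Fin ℓ → G) (d : G) : Prop :=
  ∀ g : G, g * d = d * g → (∀ i, g * a i = a i * g) →
    (∀ i, g * b i = b i * g) → g ∈ Subgroup.center G

/-! If `(g₁,g₂)·x` is `τ`-fixed, write `(g₁,g₂) = (g₂,g₂)·(h,1)` with `h = g₂⁻¹g₁`; since the
diagonal commutes with `τ`, `(h,1)·x` is `τ`-fixed too, i.e. `(h,1)·x = (1,h)·x`. So `h`
centralises `V` and `d`, hence is central by genericity, and comparing `c`-entries gives
`h⁻¹ = h`; thus `(h,1)·x = (1,h)·x = x_h`. Conversely a diagonal `(h,h)` moving `x_{r₁}` to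
`x_{r₂}` centralises `V` and `d`, so it is central and fixes `c·r₁`, forcing `r₁ = r₂`. -/

def PtK.diag {α : Type*} (a b : Fin ℓ → α) (d c : α) : PtK α ℓ := ⟨a, b, d, c, a, b, d, c⟩

theorem relProd_conj (g : G) (a b : Fin ℓ → G) :
    relProd (fun i => g * a i * g⁻¹) (fun i => g * b i * g⁻¹) = g * relProd a b * g⁻¹ := by
  simp only [relProd, ← MulAut.conj_apply, map_list_prod, List.map_ofFn, Function.comp_def,
    map_commutatorElement]

theorem inMK_actK (g : G × G) {x : PtK G ℓ} (hx : inMK x) : inMK (actK g x) := by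
  obtain ⟨h₁, h₂⟩ := hx
  constructor
  · rw [actK, relProd_conj, h₁]; group
  · rw [actK, relProd_conj, h₂]; group

theorem actK_mul (g k : G × G) (x : PtK G ℓ) : actK g (actK k x) = actK (g * k) x := by
  simp only [actK, Prod.fst_mul, Prod.snd_mul, mul_inv_rev, mul_assoc]

theorem actK_one (x : PtK G ℓ) : actK 1 x = x := by
  simp [actK]

theorem actK_injective (g : G × G) : Function.Injective (actK (ℓ := ℓ) g) := fun x y hxy => by
  simpa only [actK_mul, inv_mul_cancel, actK_one] using congrArg (actK g⁻¹) hxy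

theorem tauK_actK (g : G × G) (x : PtK G ℓ) : tauK (actK g x) = actK g.swap (tauK x) := rfl

theorem tauK_eq_self_of_inMtauK {x : PtK G ℓ} (hx : inMtauK x) : tauK x = x := by
  obtain ⟨-, ha, hb, hd, hc⟩ := hx
  cases x
  simp_all [tauK]

theorem actK_one_diag_of_mem_center {r : G} (hr : r ∈ Subgroup.center G) (hr2 : r ^ 2 = 1)
    (a b : Fin ℓ → G) (d c : G) :
    actK (1, r) (PtK.diag a b d c) = PtK.diag a b d (c * r) := by
  have hcomm := Subgroup.mem_center_iff.mp hr
  have hinv : r⁻¹ = r := inv_eq_of_mul_eq_one_right (by rw [← pow_two, hr2])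
  simp only [actK, PtK.diag, one_mul, inv_one, mul_one, hinv, ← hcomm, mul_assoc, ← pow_two, hr2]

theorem GenericK.mem_center {a b : Fin ℓ → G} {d : G} (hgen : GenericK a b d) {h : G}
    (ha : ∀ i, h * a i * h⁻¹ = a i) (hb : ∀ i, h * b i * h⁻¹ = b i) (hd : h * d * h⁻¹ = d) :
    h ∈ Subgroup.center G :=
  hgen h (mul_inv_eq_iff_eq_mul.mp hd) (fun i => mul_inv_eq_iff_eq_mul.mp (ha i))
    (fun i => mul_inv_eq_iff_eq_mul.mp (hb i))

theorem GenericK.eq_of_actK_diag_eq {a b : Fin ℓ → G} {d : G} (hgen : GenericK a b d)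
    {g c₁ c₂ : G} (hg : actK (g, g) (PtK.diag a b d c₁) = PtK.diag a b d c₂) : c₁ = c₂ := by
  simp only [actK, PtK.diag, PtK.mk.injEq, funext_iff] at hg
  obtain ⟨ha, hb, hd, hc, -⟩ := hg
  have hcomm := Subgroup.mem_center_iff.mp (hgen.mem_center ha hb hd)
  rwa [← hcomm, mul_inv_cancel_right] at hc

theorem GenericK.exists_actK_diag_eq {a b : Fin ℓ → G} {d : G} (hgen : GenericK a b d)
    (c : G) (k : G × G) (hk : tauK (actK k (PtK.diag a b d c)) = actK k (PtK.diag a b d c)) :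
    ∃ r ∈ Subgroup.center G, r ^ 2 = 1 ∧
      actK (k.2, k.2) (PtK.diag a b d (c * r)) = actK k (PtK.diag a b d c) := by
  obtain ⟨g₁, g₂⟩ := k
  set h := g₂⁻¹ * g₁
  have hsplit : ((g₁, g₂) : G × G) = (g₂, g₂) * (h, 1) := by ext <;> simp [h]
  have hfix : actK (1, h) (PtK.diag a b d c) = actK (h, 1) (PtK.diag a b d c) := by
    rw [hsplit, ← actK_mul, tauK_actK, tauK_actK] at hk
    exact actK_injective _ hk
  have hfields := hfix
  simp only [actK, PtK.diag, PtK.mk.injEq, funext_iff, one_mul, inv_one, mul_one] at hfields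
  obtain ⟨ha, hb, hd, hc, -⟩ := hfields
  have hcen := hgen.mem_center (fun i => (ha i).symm) (fun i => (hb i).symm) hd.symm
  have hinv : h⁻¹ = h := by
    rw [← Subgroup.mem_center_iff.mp hcen] at hc
    exact mul_left_cancel hc
  have hr2 : h ^ 2 = 1 := by rw [pow_two]; exact inv_eq_iff_mul_eq_one.mp hinv
  refine ⟨h, hcen, hr2, ?_⟩
  rw [← actK_one_diag_of_mem_center hcen hr2, hfix, actK_mul, ← hsplit]

theorem statement1_general (a b : Fin ℓ → G) (d c : G)
    (hx : inMK (⟨a, b, d, c, a, b, d, c⟩ : PtK G ℓ)) (hgen : GenericK a b d) :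
    -- each `x_r` lies in `M^τ` and in the `K`-orbit of `x`
    (∀ r ∈ Subgroup.center G, r ^ 2 = 1 →
      inMtauK (⟨a, b, d, c * r, a, b, d, c * r⟩ : PtK G ℓ) ∧
      ∃ k : G × G, actK k (⟨a, b, d, c, a, b, d, c⟩ : PtK G ℓ)
        = ⟨a, b, d, c * r, a, b, d, c * r⟩) ∧
    -- the assignment `r ↦ [x_r]` is injective on `{r ∈ Z(G) : r² = e}`
    (∀ r₁ ∈ Subgroup.center G, ∀ r₂ ∈ Subgroup.center G,
      r₁ ^ 2 = 1 → r₂ ^ 2 = 1 →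
      (∃ h : G, actK (h, h) (⟨a, b, d, c * r₁, a, b, d, c * r₁⟩ : PtK G ℓ)
        = ⟨a, b, d, c * r₂, a, b, d, c * r₂⟩) → r₁ = r₂) ∧
    -- and surjective: every point of `M^τ` in the `K`-orbit of `x` lies in the
    -- `K^τ`-orbit of some `x_r`
    (∀ y : PtK G ℓ, inMtauK y →
      (∃ k : G × G, actK k (⟨a, b, d, c, a, b, d, c⟩ : PtK G ℓ) = y) →
      ∃ r ∈ Subgroup.center G, r ^ 2 = 1 ∧
        ∃ h : G, actK (h, h) (⟨a, b, d, c * r, a, b, d, c * r⟩ : PtK G ℓ) = y) := by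
  refine ⟨fun r hr hr2 => ?_, fun r₁ _ r₂ _ _ _ ⟨g, hg⟩ => ?_, ?_⟩
  · have hxr := actK_one_diag_of_mem_center hr hr2 a b d c
    have hmem : inMK (PtK.diag a b d (c * r)) := hxr ▸ inMK_actK (1, r) hx
    exact ⟨⟨hmem, rfl, rfl, rfl, rfl⟩, (1, r), hxr⟩
  · exact mul_left_cancel (hgen.eq_of_actK_diag_eq hg)
  · rintro y hy ⟨k, rfl⟩
    obtain ⟨r, hr, hr2, hk⟩ := hgen.exists_actK_diag_eq c k (tauK_eq_self_of_inMtauK hy)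
    exact ⟨r, hr, hr2, k.2, hk⟩

/-- for `x = (V,d,c,V,d,c) ∈ M^τ` with `(V,d)` generic, `r ↦` the
`K^τ`-orbit of `x_r = (V,d,c·r,V,d,c·r)` is a bijection from
`{r ∈ Z(G) : r² = e}` onto the `K^τ`-orbits inside the `K`-orbit of `x`. -/
theorem statement1 (hℓ : 1 ≤ ℓ) (a b : Fin ℓ → G) (d c : G)
    (hx : inMK (⟨a, b, d, c, a, b, d, c⟩ : PtK G ℓ)) (hgen : GenericK a b d) :
    -- each `x_r` lies in `M^τ` and in the `K`-orbit of `x`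
    (∀ r ∈ Subgroup.center G, r ^ 2 = 1 →
      inMtauK (⟨a, b, d, c * r, a, b, d, c * r⟩ : PtK G ℓ) ∧
      ∃ k : G × G, actK k (⟨a, b, d, c, a, b, d, c⟩ : PtK G ℓ)
        = ⟨a, b, d, c * r, a, b, d, c * r⟩) ∧
    -- the assignment `r ↦ [x_r]` is injective on `{r ∈ Z(G) : r² = e}`
    (∀ r₁ ∈ Subgroup.center G, ∀ r₂ ∈ Subgroup.center G,
      r₁ ^ 2 = 1 → r₂ ^ 2 = 1 →
      (∃ h : G, actK (h, h) (⟨a, b, d, c * r₁, a, b, d, c * r₁⟩ : PtK G ℓ)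
        = ⟨a, b, d, c * r₂, a, b, d, c * r₂⟩) → r₁ = r₂) ∧
    -- and surjective: every point of `M^τ` in the `K`-orbit of `x` lies in the
    -- `K^τ`-orbit of some `x_r`
    (∀ y : PtK G ℓ, inMtauK y →
      (∃ k : G × G, actK k (⟨a, b, d, c, a, b, d, c⟩ : PtK G ℓ) = y) →
      ∃ r ∈ Subgroup.center G, r ^ 2 = 1 ∧
        ∃ h : G, actK (h, h) (⟨a, b, d, c * r, a, b, d, c * r⟩ : PtK G ℓ) = y) :=
  statement1_general a b d c hx hgen
end

section
/- Assume that the only r ∈ Z(G) with r² = e is r = e (which holds when Z(G) is finite of odd order). Let x = (V,c,V,c) ∈ M^τ with V generic and let x̄ ∈ M^τ. If x and x̄ lie in the same K-orbit, then they lie in the same K^τ-orbit; that is, the natural map I : M^τ/K^τ → M/K is injective at the class of x. -/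
variable {G : Type*} [Group G] {ℓ : ℕ}

open scoped commutatorElement

/-! If `(g, h) ∈ G × G` carries a `τ`-invariant point `x = (V,c,V,c)` to another `τ`-invariant point,
then conjugation by `g` and by `h` agree on `V`, so `z = h⁻¹g` centralizes `V` and is central by
genericity. Comparing the `c`- and `c̄`-components then gives `c z⁻¹ = z c = c z`, i.e. `z² = e`,
hence `z = e` and `(g, h) = (g, g)` lies in `K^τ`. -/

theorem commute_inv_mul_of_conj_eq_conj {g h a : G} (hconj : g * a * g⁻¹ = h * a * h⁻¹) :
    Commute (g⁻¹ * h) a :=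
  calc g⁻¹ * h * a = g⁻¹ * (h * a * h⁻¹) * h := by group
    _ = g⁻¹ * (g * a * g⁻¹) * h := by rw [hconj]
    _ = a * (g⁻¹ * h) := by group

theorem sq_inv_mul_eq_one_of_mul_mul_inv_eq {g h c : G} (hz : g⁻¹ * h ∈ Subgroup.center G)
    (hc : g * c * h⁻¹ = h * c * g⁻¹) : (g⁻¹ * h) ^ 2 = 1 := by
  have hcomm : c * (g⁻¹ * h) = (g⁻¹ * h) * c := Subgroup.mem_center_iff.mp hz c
  have hcz : c * (g⁻¹ * h)⁻¹ = c * (g⁻¹ * h) :=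
    calc c * (g⁻¹ * h)⁻¹ = g⁻¹ * (g * c * h⁻¹) * g := by group
      _ = g⁻¹ * (h * c * g⁻¹) * g := by rw [hc]
      _ = c * (g⁻¹ * h) := by rw [hcomm]; group
  exact (pow_two _).trans (inv_eq_iff_mul_eq_one.mp (mul_left_cancel hcz))

theorem statement3_general
    (h2 : ∀ r ∈ Subgroup.center G, r ^ 2 = 1 → r = 1)
    (x : Pt G ℓ) (hx : inMtau x) (hgen : Generic x.a x.b)
    (y : Pt G ℓ) (hy : inMtau y)
    (horb : ∃ k : G × G, act k x = y) :
    ∃ h : G, act (h, h) x = y := by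
  obtain ⟨⟨g, h⟩, rfl⟩ := horb
  obtain ⟨-, hxa, hxb, hxc⟩ := hx
  obtain ⟨-, hya, hyb, hyc⟩ := hy
  have hcenter : h⁻¹ * g ∈ Subgroup.center G :=
    hgen _ (fun i => commute_inv_mul_of_conj_eq_conj (by simpa [act, hxa] using congrFun hya i))
      (fun i => commute_inv_mul_of_conj_eq_conj (by simpa [act, hxb] using congrFun hyb i))
  have hone : h⁻¹ * g = 1 :=
    h2 _ hcenter (sq_inv_mul_eq_one_of_mul_mul_inv_eq hcenter (by simpa [act, hxc] using hyc))
  obtain rfl : h = g := inv_mul_eq_one.mp hone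
  exact ⟨h, rfl⟩

/-- if the only `r ∈ Z(G)` with `r² = e` is `r = e`, then the
natural map `I : M^τ/K^τ → M/K` is injective at the class of any generic
`x = (V,c,V,c) ∈ M^τ`: any `x̄ ∈ M^τ` in the `K`-orbit of `x` is already in
its `K^τ`-orbit. -/
theorem statement3 (hℓ : 1 ≤ ℓ)
    (h2 : ∀ r ∈ Subgroup.center G, r ^ 2 = 1 → r = 1)
    (x : Pt G ℓ) (hx : inMtau x) (hgen : Generic x.a x.b)
    (y : Pt G ℓ) (hy : inMtau y)
    (horb : ∃ k : G × G, act k x = y) :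
    ∃ h : G, act (h, h) x = y :=
  statement3_general h2 x hx hgen y hy horb
end

section
/- Let x = (V,c,V,c) ∈ M^τ with V generic, let x̄ = (V̄,c̄,V̄,c̄) ∈ M^τ, and suppose (g₁,g₂) ∈ K satisfies (g₁,g₂)·x = x̄. Then r := g₁⁻¹g₂ lies in Z(G) and satisfies r² = e. Moreover, there exists h ∈ G with (h,h)·x = x̄ if and only if r = e. -/
open scoped commutatorElement

variable {G : Type*} [Group G] {ℓ : ℕ}

/-! If `(g₁,g₂)` carries `(V,c,V,c)` to `(V̄,c̄,V̄,c̄)`, then `g₁` and `g₂` conjugate `V` to the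
same tuple, so `r = g₁⁻¹g₂` centralizes `V` and is central by genericity. Writing `g₂ = g₁r`, the
equality of the two images of `c` reads `c r⁻¹ = r c = c r`, whence `r² = e`. Any `h` with
`(h,h)·x = x̄` likewise differs from `g₁` by a central element, hence conjugates `c` as `g₁` does,
and comparing with `g₁ c g₂⁻¹` forces `g₂ = g₁`. -/

theorem act_mk_eq_mk_iff {a b a₀ b₀ : Fin ℓ → G} {c c₀ g₁ g₂ : G} :
    act (g₁, g₂) (⟨a, b, c, a, b, c⟩ : Pt G ℓ) = ⟨a₀, b₀, c₀, a₀, b₀, c₀⟩ ↔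
      (∀ i, g₁ * a i * g₁⁻¹ = a₀ i) ∧ (∀ i, g₁ * b i * g₁⁻¹ = b₀ i) ∧ g₁ * c * g₂⁻¹ = c₀ ∧
      (∀ i, g₂ * a i * g₂⁻¹ = a₀ i) ∧ (∀ i, g₂ * b i * g₂⁻¹ = b₀ i) ∧ g₂ * c * g₁⁻¹ = c₀ := by
  simp only [act, Pt.mk.injEq, funext_iff]

theorem commute_inv_mul_of_conj_eq {g h x : G} (hx : g * x * g⁻¹ = h * x * h⁻¹) :
    Commute (g⁻¹ * h) x := by
  have := congrArg (g⁻¹ * · * h) hx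
  simp only [mul_assoc, inv_mul_cancel_left, inv_mul_cancel, mul_one] at this
  simpa only [Commute, SemiconjBy, mul_assoc] using this.symm

theorem conj_eq_conj_of_inv_mul_mem_center {g h : G} (hz : g⁻¹ * h ∈ Subgroup.center G) (x : G) :
    h * x * h⁻¹ = g * x * g⁻¹ := by
  obtain ⟨z, hzc, rfl⟩ : ∃ z ∈ Subgroup.center G, h = g * z := ⟨g⁻¹ * h, hz, by group⟩
  rw [mul_assoc g z x, ← Subgroup.mem_center_iff.mp hzc x]
  group

theorem Generic.inv_mul_mem_center {a b : Fin ℓ → G} (hgen : Generic a b) {g h : G}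
    (ha : ∀ i, g * a i * g⁻¹ = h * a i * h⁻¹) (hb : ∀ i, g * b i * g⁻¹ = h * b i * h⁻¹) :
    g⁻¹ * h ∈ Subgroup.center G :=
  hgen _ (fun i => commute_inv_mul_of_conj_eq (ha i)) (fun i => commute_inv_mul_of_conj_eq (hb i))

theorem sq_inv_mul_eq_one {g₁ g₂ c : G} (hr : g₁⁻¹ * g₂ ∈ Subgroup.center G)
    (hc : g₁ * c * g₂⁻¹ = g₂ * c * g₁⁻¹) : (g₁⁻¹ * g₂) ^ 2 = 1 := by
  obtain ⟨r, rfl⟩ : ∃ r, g₂ = g₁ * r := ⟨g₁⁻¹ * g₂, by group⟩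
  rw [inv_mul_cancel_left] at hr ⊢
  have hcr : c * r⁻¹ = c * r := by
    have := congrArg (g₁⁻¹ * · * g₁) hc
    simp only [mul_inv_rev, mul_assoc, inv_mul_cancel_left, inv_mul_cancel, mul_one] at this
    rw [this, Subgroup.mem_center_iff.mp hr c]
  have hinv : r⁻¹ = r := mul_left_cancel hcr
  rw [sq, ← inv_mul_cancel r, hinv]

theorem statement4_general (a b : Fin ℓ → G) (c : G)
    (hgen : Generic a b)
    (a₀ b₀ : Fin ℓ → G) (c₀ : G)
    (g₁ g₂ : G)
    (hk : act (g₁, g₂) (⟨a, b, c, a, b, c⟩ : Pt G ℓ)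
      = ⟨a₀, b₀, c₀, a₀, b₀, c₀⟩) :
    g₁⁻¹ * g₂ ∈ Subgroup.center G ∧ (g₁⁻¹ * g₂) ^ 2 = 1 ∧
    ((∃ h : G, act (h, h) (⟨a, b, c, a, b, c⟩ : Pt G ℓ)
        = ⟨a₀, b₀, c₀, a₀, b₀, c₀⟩) ↔ g₁⁻¹ * g₂ = 1) := by
  obtain ⟨ha₁, hb₁, hc₁, ha₂, hb₂, hc₂⟩ := act_mk_eq_mk_iff.mp hk
  have hr : g₁⁻¹ * g₂ ∈ Subgroup.center G :=
    hgen.inv_mul_mem_center (fun i => (ha₁ i).trans (ha₂ i).symm)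
      (fun i => (hb₁ i).trans (hb₂ i).symm)
  refine ⟨hr, sq_inv_mul_eq_one hr (hc₁.trans hc₂.symm), ⟨?_, ?_⟩⟩
  · rintro ⟨h, hh⟩
    obtain ⟨ha, hb, hc, -⟩ := act_mk_eq_mk_iff.mp hh
    have hw : g₁⁻¹ * h ∈ Subgroup.center G :=
      hgen.inv_mul_mem_center (fun i => (ha₁ i).trans (ha i).symm)
        (fun i => (hb₁ i).trans (hb i).symm)
    have hc' : g₁ * c * g₂⁻¹ = g₁ * c * g₁⁻¹ :=
      hc₁.trans (hc.symm.trans (conj_eq_conj_of_inv_mul_mem_center hw c))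
    rw [inv_mul_eq_one, ← inv_inj, mul_left_cancel hc']
  · intro hr₁
    obtain rfl : g₁ = g₂ := inv_mul_eq_one.mp hr₁
    exact ⟨g₁, hk⟩

/-- if `(g₁,g₂)·x = x̄` with `x = (V,c,V,c)`, `x̄ = (V̄,c̄,V̄,c̄)`
in `M^τ` and `V` generic, then `r = g₁⁻¹g₂` is central with `r² = e`, and `x̄`
is in the `K^τ`-orbit of `x` iff `r = e`. -/
theorem statement4 (hℓ : 1 ≤ ℓ) (a b : Fin ℓ → G) (c : G)
    (hx : inM (⟨a, b, c, a, b, c⟩ : Pt G ℓ)) (hgen : Generic a b)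
    (a₀ b₀ : Fin ℓ → G) (c₀ : G)
    (hy : inM (⟨a₀, b₀, c₀, a₀, b₀, c₀⟩ : Pt G ℓ))
    (g₁ g₂ : G)
    (hk : act (g₁, g₂) (⟨a, b, c, a, b, c⟩ : Pt G ℓ)
      = ⟨a₀, b₀, c₀, a₀, b₀, c₀⟩) :
    g₁⁻¹ * g₂ ∈ Subgroup.center G ∧ (g₁⁻¹ * g₂) ^ 2 = 1 ∧
    ((∃ h : G, act (h, h) (⟨a, b, c, a, b, c⟩ : Pt G ℓ)
        = ⟨a₀, b₀, c₀, a₀, b₀, c₀⟩) ↔ g₁⁻¹ * g₂ = 1) :=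
  statement4_general a b c hgen a₀ b₀ c₀ g₁ g₂ hk
end

section
/- Let x = (V,c,V̄,c̄) ∈ M with V generic, and suppose (g₁,g₂) ∈ K satisfies (g₁,g₂)·x = τ(x). Then r := (g₂g₁)⁻¹ lies in Z(G), and (e,g₁⁻¹)·x = (V, c·g₁, V, c·g₁·r); this point lies in N_r, so the K-orbit of x meets N_r. -/
open scoped commutatorElement

variable {G : Type*} [Group G] {ℓ : ℕ}

theorem commute_mul_of_conj_eq {g₁ g₂ v w : G} (hv : g₁ * v * g₁⁻¹ = w)
    (hw : g₂ * w * g₂⁻¹ = v) : g₂ * g₁ * v = v * (g₂ * g₁) := by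
  subst hv
  calc g₂ * g₁ * v = g₂ * (g₁ * v * g₁⁻¹) * g₂⁻¹ * (g₂ * g₁) := by group
    _ = v * (g₂ * g₁) := by rw [hw]

section ActEqTau

variable {x : Pt G ℓ} {g₁ g₂ : G}

theorem mul_mem_center_of_act_eq_tauPt (hgen : Generic x.a x.b)
    (hk : act (g₁, g₂) x = tauPt x) : g₂ * g₁ ∈ Subgroup.center G :=
  hgen _
    (fun i => commute_mul_of_conj_eq (congrFun (congrArg Pt.a hk) i)
      (congrFun (congrArg Pt.a' hk) i))
    (fun i => commute_mul_of_conj_eq (congrFun (congrArg Pt.b hk) i)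
      (congrFun (congrArg Pt.b' hk) i))

theorem act_one_inv_eq_of_act_eq_tauPt (hk : act (g₁, g₂) x = tauPt x) :
    act ((1 : G), g₁⁻¹) x = ⟨x.a, x.b, x.c * g₁, x.a, x.b, x.c * g₁ * (g₂ * g₁)⁻¹⟩ := by
  have ha (i : Fin ℓ) : g₁ * x.a i * g₁⁻¹ = x.a' i := congrFun (congrArg Pt.a hk) i
  have hb (i : Fin ℓ) : g₁ * x.b i * g₁⁻¹ = x.b' i := congrFun (congrArg Pt.b hk) i
  have hc : g₁ * x.c * g₂⁻¹ = x.c' := congrArg Pt.c hk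
  simp only [act, Pt.mk.injEq]
  refine ⟨?_, ?_, ?_, ?_, ?_, ?_⟩
  · funext i; group
  · funext i; group
  · group
  · funext i; rw [← ha i]; group
  · funext i; rw [← hb i]; group
  · rw [← hc]; group

theorem inN_act_one_inv_of_act_eq_tauPt (hx : inM x) (hk : act (g₁, g₂) x = tauPt x) :
    inN (g₂ * g₁)⁻¹ (act ((1 : G), g₁⁻¹) x) := by
  have hc : g₁ * x.c * g₂⁻¹ = x.c' := congrArg Pt.c hk
  rw [act_one_inv_eq_of_act_eq_tauPt hk]
  refine ⟨rfl, rfl, rfl, ?_⟩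
  change relProd x.a x.b = (x.c * g₁) ^ 2 * (g₂ * g₁)⁻¹
  rw [hx.1, ← hc, pow_two]; group

end ActEqTau

theorem statement5_general (x : Pt G ℓ) (hx : inM x)
    (hgen : Generic x.a x.b)
    (g₁ g₂ : G) (hk : act (g₁, g₂) x = tauPt x) :
    (g₂ * g₁)⁻¹ ∈ Subgroup.center G ∧
    act ((1 : G), g₁⁻¹) x
      = ⟨x.a, x.b, x.c * g₁, x.a, x.b, x.c * g₁ * (g₂ * g₁)⁻¹⟩ ∧
    inN ((g₂ * g₁)⁻¹) (act ((1 : G), g₁⁻¹) x) ∧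
    ∃ k : G × G, inN ((g₂ * g₁)⁻¹) (act k x) :=
  have hN := inN_act_one_inv_of_act_eq_tauPt hx hk
  ⟨Subgroup.inv_mem _ (mul_mem_center_of_act_eq_tauPt hgen hk),
    act_one_inv_eq_of_act_eq_tauPt hk, hN, _, hN⟩

/-- if `x = (V,c,V̄,c̄) ∈ M` with `V` generic and
`(g₁,g₂)·x = τ(x)`, then `r = (g₂g₁)⁻¹` is central,
`(e,g₁⁻¹)·x = (V, c·g₁, V, c·g₁·r)`, this point lies in `N_r`, and hence the
`K`-orbit of `x` meets `N_r`. -/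
theorem statement5 (hℓ : 1 ≤ ℓ) (x : Pt G ℓ) (hx : inM x)
    (hgen : Generic x.a x.b)
    (g₁ g₂ : G) (hk : act (g₁, g₂) x = tauPt x) :
    (g₂ * g₁)⁻¹ ∈ Subgroup.center G ∧
    act ((1 : G), g₁⁻¹) x
      = ⟨x.a, x.b, x.c * g₁, x.a, x.b, x.c * g₁ * (g₂ * g₁)⁻¹⟩ ∧
    inN ((g₂ * g₁)⁻¹) (act ((1 : G), g₁⁻¹) x) ∧
    ∃ k : G × G, inN ((g₂ * g₁)⁻¹) (act k x) :=
  statement5_general x hx hgen g₁ g₂ hk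
end

section
/- Let x = (V,d,c,V̄,d̄,c̄) ∈ M with (V,d) generic, and suppose (g₁,g₂) ∈ K satisfies (g₁,g₂)·x = τ(x). Then r := (g₂g₁)⁻¹ lies in Z(G), and (e,g₁⁻¹)·x = (V, d, c·g₁, V, d, c·g₁·r). In particular the K-orbit of x contains a point of the form (V, d, c', V, d, c'·r) with r ∈ Z(G). -/
open scoped commutatorElement

variable {G : Type*} [Group G] {ℓ : ℕ}

/- Writing `y ↦ g y g⁻¹` for conjugation, `(g₁,g₂)·x = τ(x)` says that conjugation by `g₁` carries
`(V,d)` to `(V̄,d̄)` and conjugation by `g₂` carries it back. Hence `g₂g₁` centralises `(V,d)`,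
so it is central by genericity, and `c̄ = g₂⁻¹ c g₁` then gives `g₁⁻¹ c̄ = c g₁ (g₂g₁)⁻¹`. -/

theorem commute_mul_of_conj_eq_of_conj_eq {g₁ g₂ y y' : G} (h₁ : g₁ * y * g₁⁻¹ = y')
    (h₂ : g₂ * y' * g₂⁻¹ = y) : Commute (g₂ * g₁) y := by
  subst h₁
  calc g₂ * g₁ * y = (g₂ * (g₁ * y * g₁⁻¹) * g₂⁻¹) * (g₂ * g₁) := by group
    _ = y * (g₂ * g₁) := by rw [h₂]

theorem inv_conj_eq_of_conj_eq {g y y' : G} (h : g * y * g⁻¹ = y') : g⁻¹ * y' * g⁻¹⁻¹ = y := by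
  subst h
  group

section ActKEqTauK

variable {x : PtK G ℓ} {g₁ g₂ : G}

theorem mul_mem_center_of_actK_eq_tauK (hk : actK (g₁, g₂) x = tauK x)
    (hgen : GenericK x.a x.b x.d) :
    g₂ * g₁ ∈ Subgroup.center G :=
  hgen _
    (commute_mul_of_conj_eq_of_conj_eq (congrArg PtK.d hk) (congrArg PtK.d' hk))
    (fun i => commute_mul_of_conj_eq_of_conj_eq (congrFun (congrArg PtK.a hk) i)
      (congrFun (congrArg PtK.a' hk) i))
    (fun i => commute_mul_of_conj_eq_of_conj_eq (congrFun (congrArg PtK.b hk) i)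
      (congrFun (congrArg PtK.b' hk) i))

theorem actK_one_inv_of_actK_eq_tauK (hk : actK (g₁, g₂) x = tauK x)
    (hr : (g₂ * g₁)⁻¹ ∈ Subgroup.center G) :
    actK ((1 : G), g₁⁻¹) x
      = ⟨x.a, x.b, x.d, x.c * g₁, x.a, x.b, x.d, x.c * g₁ * (g₂ * g₁)⁻¹⟩ := by
  have hc : g₂ * x.c' * g₁⁻¹ = x.c := congrArg PtK.c' hk
  simp only [actK, PtK.mk.injEq]
  refine ⟨funext fun i => by group, funext fun i => by group, by group, by group,
    funext fun i => inv_conj_eq_of_conj_eq (congrFun (congrArg PtK.a hk) i),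
    funext fun i => inv_conj_eq_of_conj_eq (congrFun (congrArg PtK.b hk) i),
    inv_conj_eq_of_conj_eq (congrArg PtK.d hk), ?_⟩
  rw [← hc, Subgroup.mem_center_iff.mp hr]
  group

end ActKEqTauK

theorem statement9_general (x : PtK G ℓ)
    (hgen : GenericK x.a x.b x.d)
    (g₁ g₂ : G) (hk : actK (g₁, g₂) x = tauK x) :
    (g₂ * g₁)⁻¹ ∈ Subgroup.center G ∧
    actK ((1 : G), g₁⁻¹) x
      = ⟨x.a, x.b, x.d, x.c * g₁, x.a, x.b, x.d, x.c * g₁ * (g₂ * g₁)⁻¹⟩ ∧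
    ∃ r ∈ Subgroup.center G, ∃ c' : G, ∃ k : G × G,
      actK k x = ⟨x.a, x.b, x.d, c', x.a, x.b, x.d, c' * r⟩ := by
  have hr := inv_mem (mul_mem_center_of_actK_eq_tauK hk hgen)
  have hact := actK_one_inv_of_actK_eq_tauK hk hr
  exact ⟨hr, hact, _, hr, _, _, hact⟩

/-- if `x = (V,d,c,V̄,d̄,c̄) ∈ M` with `(V,d)` generic and
`(g₁,g₂)·x = τ(x)`, then `r = (g₂g₁)⁻¹` is central and
`(e,g₁⁻¹)·x = (V, d, c·g₁, V, d, c·g₁·r)`; in particular the `K`-orbit of `x`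
contains a point of the form `(V, d, c', V, d, c'·r)` with `r` central. -/
theorem statement9 (hℓ : 1 ≤ ℓ) (x : PtK G ℓ) (hx : inMK x)
    (hgen : GenericK x.a x.b x.d)
    (g₁ g₂ : G) (hk : actK (g₁, g₂) x = tauK x) :
    (g₂ * g₁)⁻¹ ∈ Subgroup.center G ∧
    actK ((1 : G), g₁⁻¹) x
      = ⟨x.a, x.b, x.d, x.c * g₁, x.a, x.b, x.d, x.c * g₁ * (g₂ * g₁)⁻¹⟩ ∧
    ∃ r ∈ Subgroup.center G, ∃ c' : G, ∃ k : G × G,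
      actK k x = ⟨x.a, x.b, x.d, c', x.a, x.b, x.d, c' * r⟩ :=
  statement9_general x hgen g₁ g₂ hk
end

section
/- Let a₁,b₁,…,a_ℓ,b_ℓ, c ∈ G and suppose that k := (∏_{i=1}^{ℓ}[aᵢ,bᵢ])·c² lies in the center Z(G). Then ∏_{i=1}^{ℓ}[aᵢ,bᵢ] · ∏_{j=1}^{ℓ}[c⁻¹·b_{ℓ+1-j}·c, c⁻¹·a_{ℓ+1-j}·c] = e. (This is the computation showing that the lifting to SU(2n) of a flat PSU(2n)-connection on Σ_ℓ # RP², viewed on the orientable double cover, has trivial product of commutators, hence degree 0.) -/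
/-! Write `P = ∏ [aᵢ, bᵢ]`. Since `P c²` is central and `c` commutes with `c²`, `c` commutes
with `P`. The second product is the conjugate by `c` of `∏ [b_{ℓ+1-j}, a_{ℓ+1-j}] = P⁻¹`,
so it equals `c⁻¹ P⁻¹ c = P⁻¹`. -/

open scoped commutatorElement

theorem List.ofFn_comp_rev {α : Type*} {n : ℕ} (f : Fin n → α) :
    List.ofFn (fun i => f i.rev) = (List.ofFn f).reverse := by
  refine List.ext_getElem (by simp) fun i _ _ => ?_
  simp only [List.getElem_ofFn, List.getElem_reverse, List.length_ofFn]
  congr 1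
  ext
  simp only [Fin.val_rev]
  omega

section Group

variable {G : Type*} [Group G]

theorem List.prod_ofFn_conj (c : G) {n : ℕ} (g : Fin n → G) :
    (List.ofFn fun j => c⁻¹ * g j * c).prod = c⁻¹ * (List.ofFn g).prod * c := by
  simpa [List.map_ofFn, Function.comp_def] using
    (map_list_prod (MulAut.conj c⁻¹) (List.ofFn g)).symm

theorem List.prod_ofFn_commutatorElement_rev {n : ℕ} (a b : Fin n → G) :
    (List.ofFn fun j => ⁅b j.rev, a j.rev⁆).prod = (List.ofFn fun i => ⁅a i, b i⁆).prod⁻¹ := by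
  rw [List.prod_inv_reverse, List.map_ofFn, ← List.ofFn_comp_rev]
  simp [commutatorElement_inv]

theorem commute_of_mul_mem_center {x y z : G} (h : x * y ∈ Subgroup.center G)
    (hyz : Commute y z) : Commute x z := by
  have hxy := (Subgroup.mem_center_iff.mp h z).symm
  rw [← mul_assoc, mul_assoc x, hyz.eq, ← mul_assoc] at hxy
  exact mul_right_cancel hxy

end Group

theorem statement16_general {G : Type*} [Group G] {ℓ : ℕ}
    (a b : Fin ℓ → G) (c : G)
    (hk : ((List.ofFn fun i => ⁅a i, b i⁆).prod) * c ^ 2 ∈ Subgroup.center G) :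
    (List.ofFn fun i => ⁅a i, b i⁆).prod *
      (List.ofFn fun j =>
        ⁅c⁻¹ * b j.rev * c, c⁻¹ * a j.rev * c⁆).prod = 1 := by
  have hconj : ∀ x y : G, ⁅c⁻¹ * x * c, c⁻¹ * y * c⁆ = c⁻¹ * ⁅x, y⁆ * c := fun x y => by
    simpa using (conjugate_commutatorElement x y c⁻¹).symm
  simp only [hconj, List.prod_ofFn_conj, List.prod_ofFn_commutatorElement_rev]
  generalize (List.ofFn fun i => ⁅a i, b i⁆).prod = P at hk ⊢
  have hPc : Commute P c := commute_of_mul_mem_center hk (Commute.self_pow c 2).symm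
  rw [← mul_assoc, ← mul_assoc, hPc.inv_right.eq]
  group

/-- if `k = (∏[aᵢ,bᵢ])·c²` is central, then
`∏_{i=1}^{ℓ}[aᵢ,bᵢ] · ∏_{j=1}^{ℓ}[c⁻¹b_{ℓ+1-j}c, c⁻¹a_{ℓ+1-j}c] = e`.
(The lift of a flat `PSU(2n)`-connection on `Σ_ℓ # RP²` to the orientable
double cover has trivial product of commutators, hence degree `0`.) -/
theorem statement16 {G : Type*} [Group G] {ℓ : ℕ} (hℓ : 1 ≤ ℓ)
    (a b : Fin ℓ → G) (c : G)
    (hk : ((List.ofFn fun i => ⁅a i, b i⁆).prod) * c ^ 2 ∈ Subgroup.center G) :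
    (List.ofFn fun i => ⁅a i, b i⁆).prod *
      (List.ofFn fun j =>
        ⁅c⁻¹ * b j.rev * c, c⁻¹ * a j.rev * c⁆).prod = 1 :=
  statement16_general a b c hk
end
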